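/- arXiv:1703.06401 — 10 statements merged into one kernel-verified Lean document; each statement's English description precedes it below -/
import Mathlib

section
/- For any real or complex sequence (a_k), and any positive integer n, the double sum ∑_{k=1}^n (1/k) ∑_{j=1}^k (-1)^j C(k,j) a_j equals ∑_{k=1}^n (-1)^k C(n,k) a_k / k. -/
/-! Since `C(k, j) = 0` for `k < j`, exchanging the two sums turns the left side into
`∑ j, (-1)^j a_j ∑_{k ≤ n} C(k, j) / k`, and the inner sum is `C(n, j) / j`: adding
the term `k = n + 1` is Pascal's rule, because `C(n + 1, j + 1) / (n + 1) = C(n, j) / (j + 1)`. -/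

open Finset

section

variable {K : Type*} [Field K] [CharZero K]

theorem Nat.cast_choose_succ_succ_div (n j : ℕ) :
    ((n + 1).choose (j + 1) : K) / (n + 1) = n.choose j / (j + 1) := by
  have h : ((n + 1 : ℕ) : K) * n.choose j = (n + 1).choose (j + 1) * (j + 1 : ℕ) := by
    exact_mod_cast Nat.add_one_mul_choose_eq n j
  push_cast at h
  field_simp
  linear_combination h.symm

theorem sum_Icc_cast_choose_div (n : ℕ) {j : ℕ} (hj : 0 < j) :
    ∑ k ∈ Icc 1 n, (k.choose j : K) / k = n.choose j / j := by
  obtain ⟨i, rfl⟩ := Nat.exists_eq_add_of_lt hj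
  induction n with
  | zero => simp
  | succ n ih =>
    rw [sum_Icc_succ_top (by omega), ih]
    push_cast
    rw [Nat.cast_choose_succ_succ_div, Nat.choose_succ_succ']
    push_cast
    ring

end

theorem stmt_0_general (a : ℕ → ℂ) (n : ℕ) :
    ∑ k ∈ Finset.Icc 1 n, (1 / (k : ℂ)) * ∑ j ∈ Finset.Icc 1 k, (-1) ^ j * (Nat.choose k j : ℂ) * a j
      = ∑ k ∈ Finset.Icc 1 n, (-1) ^ k * (Nat.choose n k : ℂ) * a k / k := by
  have extend : ∀ k ∈ Icc 1 n, ∑ j ∈ Icc 1 k, (-1) ^ j * (k.choose j : ℂ) * a j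
      = ∑ j ∈ Icc 1 n, (-1) ^ j * (k.choose j : ℂ) * a j := by
    intro k hk
    refine sum_subset (Icc_subset_Icc_right (mem_Icc.1 hk).2) fun j _ hjk => ?_
    rw [Nat.choose_eq_zero_of_lt (by simp_all), Nat.cast_zero, mul_zero, zero_mul]
  calc _ = ∑ k ∈ Icc 1 n, ∑ j ∈ Icc 1 n, (-1) ^ j * a j * ((k.choose j : ℂ) / k) := by
        refine sum_congr rfl fun k hk => ?_
        rw [extend k hk, mul_sum]
        exact sum_congr rfl fun j _ => by ring
    _ = ∑ j ∈ Icc 1 n, (-1) ^ j * a j * ∑ k ∈ Icc 1 n, (k.choose j : ℂ) / k := by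
        rw [sum_comm]
        simp only [mul_sum]
    _ = _ := sum_congr rfl fun j hj => by
        rw [sum_Icc_cast_choose_div n (mem_Icc.1 hj).1]
        ring

theorem stmt_0 (a : ℕ → ℂ) (n : ℕ) (hn : 1 ≤ n) :
    ∑ k ∈ Finset.Icc 1 n, (1 / (k : ℂ)) * ∑ j ∈ Finset.Icc 1 k, (-1) ^ j * (Nat.choose k j : ℂ) * a j
      = ∑ k ∈ Finset.Icc 1 n, (-1) ^ k * (Nat.choose n k : ℂ) * a k / k :=
  stmt_0_general a n
end

section
/- For all positive integers n and m, S_n(m) = ∑_{k=1}^n S_k(m-1)/k, where S_n(m) = ∑_{k=1}^n C(n,k) (-1)^{k-1}/k^m and S_n(0) = 1. -/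
/-! Pascal's rule together with `k * C(n+1, k) = (n+1) * C(n, k-1)` gives
`S_{n+1}(m+1) = S_n(m+1) + S_{n+1}(m) / (n+1)`; summing this telescoping recursion from
`S_0 = 0` yields the theorem. -/

open Finset

/-- `S_n(m)`. -/
noncomputable def altBinomSum (K : Type*) [Field K] (n m : ℕ) : K :=
  ∑ k ∈ Icc 1 n, (n.choose k : K) * (-1) ^ (k - 1) / (k : K) ^ m

section

variable {K : Type*} [Field K]

theorem choose_succ_succ_div_pow [CharZero K] (n j p : ℕ) :
    ((n + 1).choose (j + 1) : K) / ((j : K) + 1) ^ (p + 1)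
      = (n.choose (j + 1) : K) / ((j : K) + 1) ^ (p + 1)
        + ((n + 1).choose (j + 1) : K) / ((j : K) + 1) ^ p / ((n : K) + 1) := by
  have absorb : ((n : K) + 1) * n.choose j = (n + 1).choose (j + 1) * ((j : K) + 1) := by
    exact_mod_cast Nat.add_one_mul_choose_eq n j
  have pascal : ((n + 1).choose (j + 1) : K) = n.choose j + n.choose (j + 1) := by
    exact_mod_cast Nat.choose_succ_succ n j
  have hn : (n : K) + 1 ≠ 0 := Nat.cast_add_one_ne_zero n
  have hj : (j : K) + 1 ≠ 0 := Nat.cast_add_one_ne_zero j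
  field_simp
  linear_combination ((j : K) + 1) ^ p * absorb + ((n : K) + 1) * ((j : K) + 1) ^ p * pascal

theorem altBinomSum_zero_left (m : ℕ) : altBinomSum K 0 m = 0 := by
  simp [altBinomSum]

theorem altBinomSum_succ_succ [CharZero K] (n m : ℕ) :
    altBinomSum K (n + 1) (m + 1) = altBinomSum K n (m + 1) + altBinomSum K (n + 1) m / (n + 1) := by
  have top_vanishes : altBinomSum K n (m + 1)
      = ∑ k ∈ Icc 1 (n + 1), (n.choose k : K) * (-1) ^ (k - 1) / (k : K) ^ (m + 1) := by
    rw [sum_Icc_succ_top (by omega), Nat.choose_succ_self, Nat.cast_zero, zero_mul, zero_div,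
      add_zero, altBinomSum]
  rw [top_vanishes, altBinomSum, altBinomSum, sum_div, ← sum_add_distrib]
  refine sum_congr rfl fun k hk => ?_
  obtain ⟨j, rfl⟩ : ∃ j, k = j + 1 := ⟨k - 1, by have := (mem_Icc.mp hk).1; omega⟩
  push_cast
  linear_combination (-1 : K) ^ j * choose_succ_succ_div_pow (K := K) n j m

theorem altBinomSum_succ_eq_sum_div [CharZero K] (n m : ℕ) :
    altBinomSum K n (m + 1) = ∑ k ∈ Icc 1 n, altBinomSum K k m / k := by
  induction n with
  | zero => simp [altBinomSum_zero_left]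
  | succ n ih =>
    rw [altBinomSum_succ_succ, ih, sum_Icc_succ_top (by omega)]
    push_cast
    rfl

end

theorem stmt_2_general (n m : ℕ) (hm : 1 ≤ m) :
    ∑ k ∈ Finset.Icc 1 n, (Nat.choose n k : ℝ) * (-1) ^ (k - 1) / (k : ℝ) ^ m
      = ∑ k ∈ Finset.Icc 1 n,
          (∑ j ∈ Finset.Icc 1 k, (Nat.choose k j : ℝ) * (-1) ^ (j - 1) / (j : ℝ) ^ (m - 1)) / k := by
  obtain ⟨p, rfl⟩ : ∃ p, m = p + 1 := ⟨m - 1, by omega⟩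
  exact altBinomSum_succ_eq_sum_div n p

theorem stmt_2 (n m : ℕ) (hn : 1 ≤ n) (hm : 1 ≤ m) :
    ∑ k ∈ Finset.Icc 1 n, (Nat.choose n k : ℝ) * (-1) ^ (k - 1) / (k : ℝ) ^ m
      = ∑ k ∈ Finset.Icc 1 n,
          (∑ j ∈ Finset.Icc 1 k, (Nat.choose k j : ℝ) * (-1) ^ (j - 1) / (j : ℝ) ^ (m - 1)) / k :=
  stmt_2_general n m hm
end

section
/- For all positive integers n and m, ∑_{k=1}^n (-1)^{k-1} C(n,k) S_k(m)/k = H_n^{(m+1)}, where S_k(m) = ∑_{j=1}^k C(k,j)(-1)^{j-1}/j^m and H_n^{(r)} = ∑_{k=1}^n 1/k^r. -/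
/-!
Expanding `S_k(m)` and exchanging the two summations reduces the identity to
`∑_{k=1}^n (-1)^(k-1) C(n,k) C(k,j) / k = (-1)^(j-1) / j` for `1 ≤ j ≤ n`. Since
`C(n,k) C(k,j) = C(n,j) C(n-j,k-j)`, the left side is `(-1)^(j-1) C(n,j)` times the partial
fraction expansion `∑_i (-1)^i C(M,i) / (x + i) = M! / (x (x+1) ⋯ (x+M))` at `x = j`,
`M = n - j`, which equals `1 / (j C(n,j))`.
-/

open Finset
open scoped Nat

theorem sum_range_neg_one_pow_mul_choose_succ_mul {R : Type*} [CommRing R] (M : ℕ)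
    (g : ℕ → R) :
    ∑ i ∈ range (M + 2), (-1) ^ i * ((M + 1).choose i : R) * g i =
      ∑ i ∈ range (M + 1), (-1) ^ i * (M.choose i : R) * (g i - g (i + 1)) := by
  have hshift : ∑ i ∈ range (M + 1), (-1) ^ i * (M.choose i : R) * g i =
      ∑ i ∈ range (M + 1), (-1) ^ (i + 1) * (M.choose (i + 1) : R) * g (i + 1) + g 0 := by
    have hlast : ∑ i ∈ range (M + 2), (-1) ^ i * (M.choose i : R) * g i =
        ∑ i ∈ range (M + 1), (-1) ^ i * (M.choose i : R) * g i := by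
      simp [sum_range_succ _ (M + 1)]
    rw [← hlast, sum_range_succ']
    simp
  simp only [mul_sub, sum_sub_distrib]
  rw [hshift, sum_range_succ']
  simp only [Nat.choose_succ_succ, Nat.cast_add, pow_succ, add_mul, mul_add, sum_add_distrib,
    mul_neg, mul_one, neg_mul, sum_neg_distrib, pow_zero, Nat.choose_zero_right, Nat.cast_one,
    one_mul]
  ring

theorem sum_range_neg_one_pow_mul_choose_div_add {K : Type*} [Field K] (M : ℕ) (x : K)
    (hx : ∀ i ≤ M, x + i ≠ 0) :
    ∑ i ∈ range (M + 1), (-1) ^ i * (M.choose i : K) / (x + i) =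
      M ! / ∏ i ∈ range (M + 1), (x + i) := by
  induction M generalizing x with
  | zero => simp
  | succ M ih =>
    have hshift : ∀ i : ℕ, x + ↑(i + 1) = x + 1 + i := fun i ↦ by push_cast; ring
    have hx' : ∀ i ≤ M, x + 1 + i ≠ 0 := fun i hi ↦ hshift i ▸ hx (i + 1) (by omega)
    have hprod_succ : ∏ i ∈ range (M + 1 + 1), (x + i) =
        (∏ i ∈ range (M + 1), (x + i)) * (x + (M + 1)) := by
      rw [prod_range_succ]
      push_cast
      rfl
    have hprod_succ' :
        ∏ i ∈ range (M + 1 + 1), (x + i) = x * ∏ i ∈ range (M + 1), (x + 1 + i) := by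
      rw [prod_range_succ', mul_comm]
      push_cast
      simp only [add_zero, add_assoc, add_comm (1 : K)]
    simp only [div_eq_mul_inv] at ih ⊢
    simp only [sum_range_neg_one_pow_mul_choose_succ_mul, mul_sub, sum_sub_distrib, hshift]
    rw [ih x fun i hi ↦ hx i (by omega), ih (x + 1) hx']
    have hP : ∏ i ∈ range (M + 1), (x + i) ≠ 0 :=
      prod_ne_zero_iff.2 fun i hi ↦ hx i (by simp at hi; omega)
    have hx0 : x ≠ 0 := by simpa using hx 0 (by omega)
    have hxM : x + (M + 1) ≠ 0 := by exact_mod_cast hx (M + 1) le_rfl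
    have hP' : ∏ i ∈ range (M + 1), (x + 1 + i) =
        (∏ i ∈ range (M + 1), (x + i)) * (x + (M + 1)) / x := by
      rw [← hprod_succ, hprod_succ']
      field_simp
    rw [hprod_succ, hP', Nat.factorial_succ]
    push_cast
    field_simp
    ring

theorem sum_range_neg_one_pow_mul_choose_div_natCast_add {K : Type*} [Field K] [CharZero K]
    (M : ℕ) {j : ℕ} (hj : j ≠ 0) :
    ∑ i ∈ range (M + 1), (-1) ^ i * (M.choose i : K) / (j + i) =
      1 / (j * (M + j).choose j) := by
  obtain ⟨a, rfl⟩ : ∃ a, j = a + 1 := ⟨j - 1, by omega⟩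
  have hprod : ∏ i ∈ range (M + 1), ((a + 1 : ℕ) + i : K) = (a + 1).ascFactorial (M + 1) := by
    simp [Nat.ascFactorial_eq_prod_range]
  have hasc : M ! * ((a + 1) * (M + (a + 1)).choose (a + 1)) = (a + 1).ascFactorial (M + 1) := by
    apply Nat.eq_of_mul_eq_mul_left (Nat.factorial_pos a)
    rw [Nat.factorial_mul_ascFactorial, show a + (M + 1) = M + (a + 1) by ring,
      ← Nat.add_choose_mul_factorial_mul_factorial M (a + 1), Nat.factorial_succ]
    ring
  have hasc_ne : ((a + 1).ascFactorial (M + 1) : K) ≠ 0 :=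
    Nat.cast_ne_zero.2 (Nat.ascFactorial_pos a _).ne'
  have hden : ((a + 1 : ℕ) * (M + (a + 1)).choose (a + 1) : K) ≠ 0 := by
    exact_mod_cast Nat.mul_ne_zero (by omega) (Nat.choose_pos (by omega)).ne'
  rw [sum_range_neg_one_pow_mul_choose_div_add M _ fun i _ ↦ by norm_cast; omega, hprod,
    div_eq_div_iff hasc_ne hden, one_mul]
  exact_mod_cast hasc

theorem sum_Icc_neg_one_pow_mul_choose_mul_choose_div {K : Type*} [Field K] [CharZero K]
    {n j : ℕ} (hj : j ≠ 0) (hjn : j ≤ n) :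
    ∑ k ∈ Icc 1 n, (-1 : K) ^ (k - 1) * n.choose k * k.choose j / k = (-1) ^ (j - 1) / j := by
  obtain ⟨M, rfl⟩ : ∃ M, n = M + j := ⟨n - j, by omega⟩
  have hshift : ∑ k ∈ Icc 1 (M + j), (-1 : K) ^ (k - 1) * (M + j).choose k * k.choose j / k =
      ∑ i ∈ range (M + 1),
        (-1 : K) ^ (j + i - 1) * (M + j).choose (j + i) * (j + i).choose j / ↑(j + i) := by
    rw [← sum_subset (Icc_subset_Icc_left (Nat.one_le_iff_ne_zero.2 hj)),
      ← Ico_add_one_right_eq_Icc, sum_Ico_eq_sum_range, show M + j + 1 - j = M + 1 by omega]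
    intro k hk hkj
    simp only [mem_Icc, not_and, not_le] at hk hkj
    simp [Nat.choose_eq_zero_of_lt (show k < j by omega)]
  have hterm : ∀ i ∈ range (M + 1),
      (-1 : K) ^ (j + i - 1) * (M + j).choose (j + i) * (j + i).choose j / ↑(j + i) =
        (-1) ^ (j - 1) * (M + j).choose j * ((-1) ^ i * (M.choose i : K) / (j + i)) := by
    intro i _
    have h := Nat.choose_mul (n := M + j) (Nat.le_add_right j i)
    simp only [Nat.add_sub_cancel, Nat.add_sub_cancel_left] at h
    rw [show j + i - 1 = j - 1 + i by omega, pow_add,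
      mul_assoc _ (((M + j).choose (j + i) : ℕ) : K), ← Nat.cast_mul, h]
    push_cast
    ring
  have hC : ((M + j).choose j : K) ≠ 0 := Nat.cast_ne_zero.2 (Nat.choose_pos (by omega)).ne'
  rw [hshift, sum_congr rfl hterm, ← mul_sum,
    sum_range_neg_one_pow_mul_choose_div_natCast_add M hj]
  field_simp

theorem stmt_6_general (n m : ℕ) :
    ∑ k ∈ Finset.Icc 1 n, (-1 : ℝ) ^ (k - 1) * (Nat.choose n k : ℝ) *
        (∑ j ∈ Finset.Icc 1 k, (Nat.choose k j : ℝ) * (-1) ^ (j - 1) / (j : ℝ) ^ m) / k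
      = ∑ k ∈ Finset.Icc 1 n, (1 : ℝ) / (k : ℝ) ^ (m + 1) := by
  have hexpand : ∀ k ∈ Icc 1 n,
      (-1 : ℝ) ^ (k - 1) * n.choose k *
          (∑ j ∈ Icc 1 k, (k.choose j : ℝ) * (-1) ^ (j - 1) / (j : ℝ) ^ m) / k =
        ∑ j ∈ Icc 1 n, (-1) ^ (j - 1) / (j : ℝ) ^ m *
          ((-1) ^ (k - 1) * n.choose k * k.choose j / k) := by
    intro k hk
    rw [← sum_subset (Icc_subset_Icc_right (mem_Icc.1 hk).2), mul_sum, sum_div]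
    · exact sum_congr rfl fun j _ ↦ by ring
    · intro j hjn hjk
      simp only [mem_Icc] at hjn hjk
      simp [Nat.choose_eq_zero_of_lt (show k < j by omega)]
  rw [sum_congr rfl hexpand, sum_comm]
  refine sum_congr rfl fun j hj ↦ ?_
  obtain ⟨hj1, hjn⟩ := mem_Icc.1 hj
  rw [← mul_sum, sum_Icc_neg_one_pow_mul_choose_mul_choose_div (by omega) hjn,
    div_mul_div_comm, ← mul_pow, neg_one_mul, neg_neg, one_pow, pow_succ]

theorem stmt_6 (n m : ℕ) (hn : 1 ≤ n) (hm : 1 ≤ m) :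
    ∑ k ∈ Finset.Icc 1 n, (-1 : ℝ) ^ (k - 1) * (Nat.choose n k : ℝ) *
        (∑ j ∈ Finset.Icc 1 k, (Nat.choose k j : ℝ) * (-1) ^ (j - 1) / (j : ℝ) ^ m) / k
      = ∑ k ∈ Finset.Icc 1 n, (1 : ℝ) / (k : ℝ) ^ (m + 1) :=
  stmt_6_general n m
end

section
/- For all positive integers n and m, ∑_{k=1}^n (-1)^{k-1} C(n,k) H_k^{(m+1)} = S_n(m)/n, where S_n(m) = ∑_{k=1}^n C(n,k)(-1)^{k-1}/k^m. -/
/-!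
Expanding `H_k^{(m+1)}` and exchanging the two sums, the coefficient of `1 / j^(m+1)` is the tail
`∑_{k ≥ j} (-1)^(k-1) C(n,k)`. By Pascal's rule this tail telescopes to `(-1)^(j-1) C(n-1,j-1)`,
and `C(n-1,j-1) = (j/n) C(n,j)` turns `1 / j^(m+1)` into `1 / (n j^m)`.
-/

open Finset

theorem sum_mul_sum_Icc_eq_sum_sum_Icc_mul {M : Type*} [NonUnitalNonAssocSemiring M]
    (a b : ℕ → M) (n : ℕ) :
    ∑ k ∈ Icc 1 n, a k * ∑ j ∈ Icc 1 k, b j = ∑ j ∈ Icc 1 n, (∑ k ∈ Icc j n, a k) * b j := by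
  simp_rw [mul_sum, sum_mul]
  exact sum_comm' fun k j => by simp only [mem_Icc]; omega

theorem sum_Icc_neg_one_pow_mul_choose_succ {R : Type*} [Ring R] (n j : ℕ) :
    ∑ k ∈ Icc (j + 1) (n + 1), (-1 : R) ^ (k - 1) * (n + 1).choose k
      = (-1) ^ j * n.choose j := by
  rcases le_or_gt j n with hjn | hnj
  · have hpascal (i : ℕ) : (-1 : R) ^ i * (n + 1).choose (i + 1)
        = -((-1) ^ (i + 1) * n.choose (i + 1) - (-1) ^ i * n.choose i) := by
      rw [Nat.choose_succ_succ']
      push_cast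
      noncomm_ring
    rw [← Ico_add_one_right_eq_Icc, ← sum_Ico_add' _ j (n + 1) 1]
    simp only [Nat.add_sub_cancel, hpascal, sum_neg_distrib]
    rw [sum_Ico_sub (fun i => (-1 : R) ^ i * n.choose i) (Nat.le_succ_of_le hjn),
      Nat.choose_succ_self, Nat.cast_zero, mul_zero, zero_sub, neg_neg]
  · rw [Icc_eq_empty (by omega), sum_empty, Nat.choose_eq_zero_of_lt hnj, Nat.cast_zero, mul_zero]

theorem stmt_7_general (n m : ℕ) :
    ∑ k ∈ Finset.Icc 1 n, (-1 : ℝ) ^ (k - 1) * (Nat.choose n k : ℝ) *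
        (∑ j ∈ Finset.Icc 1 k, (1 : ℝ) / (j : ℝ) ^ (m + 1))
      = (∑ k ∈ Finset.Icc 1 n, (Nat.choose n k : ℝ) * (-1) ^ (k - 1) / (k : ℝ) ^ m) / n := by
  rw [sum_mul_sum_Icc_eq_sum_sum_Icc_mul (fun k => (-1 : ℝ) ^ (k - 1) * (n.choose k : ℝ)), sum_div]
  refine sum_congr rfl fun j hj => ?_
  obtain ⟨hj1, hjn⟩ := mem_Icc.mp hj
  obtain ⟨j, rfl⟩ := Nat.exists_eq_add_of_le' hj1
  obtain ⟨n, rfl⟩ := Nat.exists_eq_add_of_le' (hj1.trans hjn)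
  rw [sum_Icc_neg_one_pow_mul_choose_succ, Nat.add_sub_cancel]
  have hchoose : ((n + 1 : ℕ) : ℝ) * n.choose j = (n + 1).choose (j + 1) * (j + 1 : ℕ) := by
    exact_mod_cast Nat.add_one_mul_choose_eq n j
  field_simp
  push_cast at hchoose ⊢
  linear_combination ((j : ℝ) + 1) ^ m * hchoose

theorem stmt_7 (n m : ℕ) (hn : 1 ≤ n) (hm : 1 ≤ m) :
    ∑ k ∈ Finset.Icc 1 n, (-1 : ℝ) ^ (k - 1) * (Nat.choose n k : ℝ) *
        (∑ j ∈ Finset.Icc 1 k, (1 : ℝ) / (j : ℝ) ^ (m + 1))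
      = (∑ k ∈ Finset.Icc 1 n, (Nat.choose n k : ℝ) * (-1) ^ (k - 1) / (k : ℝ) ^ m) / n :=
  stmt_7_general n m
end

section
/- For every positive integer n, ∑_{k=1}^n (-1)^{k-1} C(n,k) H_k/k = H_n^{(2)}. -/
/-!
Write `S_f(n) = ∑_{k=1}^n (-1)^(k-1) C(n,k) f(k)`. Pascal's rule gives
`S_f(n+1) - S_f(n) = ∑_j (-1)^j C(n,j) f(j+1)`, and absorption `C(n,j)/(j+1) = C(n+1,j+1)/(n+1)`
turns this increment, for `f(k) = H_k / k`, into `S_H(n+1) / (n+1)`. The same two rules together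
with `H_{j+1} = H_j + 1/(j+1)` give `S_H(n+1) = -S_H(n) + S_1(n+1)/(n+1) + S_H(n) = 1/(n+1)`, so
`S_{H/k}` grows by exactly `1/(n+1)^2` at each step.
-/

open Finset

section CommRing

variable {R : Type*} [CommRing R]

-- `∑_{k=1}^n (-1)^(k-1) C(n,k) f(k)`, indexed by `j = k - 1` to avoid truncated subtraction.
def altChooseSum (f : ℕ → R) (n : ℕ) : R :=
  ∑ j ∈ range n, (-1) ^ j * n.choose (j + 1) * f (j + 1)

theorem altChooseSum_eq_sum_Icc (f : ℕ → R) (n : ℕ) :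
    altChooseSum f n = ∑ k ∈ Icc 1 n, (-1) ^ (k - 1) * n.choose k * f k := by
  rw [← Ico_add_one_right_eq_Icc, sum_Ico_eq_sum_range, altChooseSum]
  simp only [add_tsub_cancel_right, add_comm 1]

theorem altChooseSum_succ (f : ℕ → R) (n : ℕ) :
    altChooseSum f (n + 1) =
      altChooseSum f n + ∑ j ∈ range (n + 1), (-1) ^ j * n.choose j * f (j + 1) := by
  simp only [altChooseSum, Nat.choose_succ_succ, Nat.cast_add, mul_add, add_mul,
    sum_add_distrib, sum_range_succ _ n, Nat.choose_succ_self, Nat.cast_zero, mul_zero,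
    zero_mul, add_zero]
  ring

theorem sum_alternating_choose_mul (f : ℕ → R) (n : ℕ) :
    ∑ j ∈ range (n + 1), (-1) ^ j * n.choose j * f j = f 0 - altChooseSum f n := by
  rw [sum_range_succ', altChooseSum]
  simp only [pow_succ, pow_zero, Nat.choose_zero_right, Nat.cast_one, one_mul, mul_neg_one,
    neg_mul, sum_neg_distrib]
  ring

theorem altChooseSum_one {n : ℕ} (hn : n ≠ 0) : altChooseSum (fun _ ↦ (1 : R)) n = 1 := by
  have h := sum_alternating_choose_mul (fun _ ↦ (1 : R)) n
  have h0 : ∑ j ∈ range (n + 1), (-1 : R) ^ j * n.choose j = 0 := by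
    exact_mod_cast congrArg (Int.cast : ℤ → R) (Int.alternating_sum_range_choose_of_ne hn)
  simp only [mul_one, h0] at h
  linear_combination h

end CommRing

section Field

variable {K : Type*} [Field K] [CharZero K]

theorem sum_alternating_choose_mul_div_succ (f : ℕ → K) (n : ℕ) :
    ∑ j ∈ range (n + 1), (-1) ^ j * n.choose j * (f (j + 1) / (j + 1)) =
      altChooseSum f (n + 1) / (n + 1) := by
  rw [altChooseSum, sum_div]
  refine sum_congr rfl fun j _ ↦ ?_
  have h : ((n : K) + 1) * n.choose j = (n + 1).choose (j + 1) * ((j : K) + 1) := by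
    exact_mod_cast Nat.add_one_mul_choose_eq n j
  field_simp
  linear_combination f (j + 1) * h

theorem altChooseSum_harmonic_succ (n : ℕ) :
    altChooseSum (fun k ↦ (harmonic k : K)) (n + 1) = 1 / (n + 1) := by
  have hH : ∀ j : ℕ, (harmonic (j + 1) : K) = harmonic j + 1 / (j + 1) := fun j ↦ by
    push_cast [harmonic_succ]; ring
  rw [altChooseSum_succ]
  simp only [hH, mul_add, sum_add_distrib]
  rw [sum_alternating_choose_mul (fun k ↦ (harmonic k : K)),
    sum_alternating_choose_mul_div_succ (fun _ ↦ 1), altChooseSum_one n.succ_ne_zero]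
  simp

theorem altChooseSum_harmonic_div (n : ℕ) :
    altChooseSum (fun k ↦ (harmonic k : K) / k) n = ∑ k ∈ Icc 1 n, 1 / (k : K) ^ 2 := by
  induction n with
  | zero => simp [altChooseSum]
  | succ n ih =>
    rw [altChooseSum_succ, ih, sum_Icc_succ_top (by omega)]
    push_cast
    rw [sum_alternating_choose_mul_div_succ (fun k ↦ (harmonic k : K)), altChooseSum_harmonic_succ]
    field_simp

end Field

theorem stmt_8_general (n : ℕ) :
    ∑ k ∈ Finset.Icc 1 n, (-1 : ℝ) ^ (k - 1) * (Nat.choose n k : ℝ) *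
        (∑ j ∈ Finset.Icc 1 k, (1 : ℝ) / j) / k
      = ∑ k ∈ Finset.Icc 1 n, (1 : ℝ) / (k : ℝ) ^ 2 := by
  have hH : ∀ k : ℕ, ∑ j ∈ Icc 1 k, (1 : ℝ) / j = harmonic k := fun k ↦ by
    simp [harmonic_eq_sum_Icc]
  simp_rw [hH, mul_div_assoc]
  rw [← altChooseSum_eq_sum_Icc, altChooseSum_harmonic_div]

theorem stmt_8 (n : ℕ) (hn : 1 ≤ n) :
    ∑ k ∈ Finset.Icc 1 n, (-1 : ℝ) ^ (k - 1) * (Nat.choose n k : ℝ) *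
        (∑ j ∈ Finset.Icc 1 k, (1 : ℝ) / j) / k
      = ∑ k ∈ Finset.Icc 1 n, (1 : ℝ) / (k : ℝ) ^ 2 :=
  stmt_8_general n
end

section
/- For every positive integer n, ∑_{k=1}^n (-1)^{k-1} C(n,k) (1/k) ∑_{j=1}^k H_j/j = H_n^{(3)}. -/
/-!
Write `B a n = ∑_{k=1}^n (-1)^(k-1) C(n,k) a k`. Swapping summations and evaluating the tail sums
`∑_{k ≥ j} (-1)^(k-1) C(n,k) = (-1)^(j-1) C(n-1,j-1)` gives `B (∑_{j ≤ ·} w j / j) n = B w n / n`,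
while Pascal's rule gives `B (a / ·) n - B (a / ·) (n-1) = B a n / n`. Since `B 1 n = 1`, the first
rule applied twice yields `B H n = 1/n` and `B (∑_{j ≤ ·} H j / j) n = 1/n²`, and the second one
turns the latter into `∑_{m ≤ n} 1/m³`.
-/

open Finset

def alternatingChooseSum {R : Type*} [CommRing R] (a : ℕ → R) (n : ℕ) : R :=
  ∑ k ∈ Icc 1 n, (-1) ^ (k - 1) * (n.choose k : R) * a k

section CommRing

variable {R : Type*} [CommRing R]

theorem alternatingChooseSum_congr {a b : ℕ → R} {n : ℕ} (h : ∀ k ∈ Icc 1 n, a k = b k) :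
    alternatingChooseSum a n = alternatingChooseSum b n :=
  sum_congr rfl fun k hk ↦ by rw [h k hk]

theorem sum_Icc_neg_one_pow_mul_choose {i m : ℕ} (h : i ≤ m) :
    ∑ k ∈ Icc (i + 1) (m + 1), (-1 : R) ^ (k - 1) * ((m + 1).choose k : R) =
      (-1) ^ i * (m.choose i : R) := by
  obtain ⟨d, rfl⟩ := Nat.exists_eq_add_of_le h
  induction d generalizing i with
  | zero => simp
  | succ d ih =>
    have ih' := @ih (i + 1) (by omega)
    rw [show i + 1 + d = i + d + 1 by omega] at ih'
    rw [show i + (d + 1) = i + d + 1 by omega, Icc_eq_cons_Ioc (by omega), sum_cons,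
      ← Icc_add_one_left_eq_Ioc, ih', Nat.choose_succ_succ' (i + d + 1) i, Nat.add_sub_cancel]
    push_cast
    ring

theorem mul_alternatingChooseSum_partialSums (w : ℕ → R) (n : ℕ) :
    (n : R) * alternatingChooseSum (fun k ↦ ∑ j ∈ Icc 1 k, w j) n =
      alternatingChooseSum (fun k ↦ k * w k) n := by
  rcases n with _ | m
  · simp [alternatingChooseSum]
  have hswap : alternatingChooseSum (fun k ↦ ∑ j ∈ Icc 1 k, w j) (m + 1) =
      ∑ j ∈ Icc 1 (m + 1), (-1) ^ (j - 1) * (m.choose (j - 1) : R) * w j := by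
    simp only [alternatingChooseSum, mul_sum]
    rw [sum_comm' (t' := Icc 1 (m + 1)) (s' := fun j ↦ Icc j (m + 1))
      (by intro k j; simp only [mem_Icc]; omega)]
    refine sum_congr rfl fun j hj ↦ ?_
    obtain ⟨i, rfl⟩ : ∃ i, j = i + 1 := ⟨j - 1, by grind⟩
    rw [← sum_mul, sum_Icc_neg_one_pow_mul_choose (by grind), Nat.add_sub_cancel]
  rw [hswap, alternatingChooseSum, mul_sum]
  refine sum_congr rfl fun j hj ↦ ?_
  obtain ⟨i, rfl⟩ : ∃ i, j = i + 1 := ⟨j - 1, by grind⟩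
  have h := congrArg (Nat.cast : ℕ → R) (Nat.add_one_mul_choose_eq m i)
  push_cast at h ⊢
  linear_combination (-1) ^ i * w (i + 1) * h

theorem alternatingChooseSum_one {n : ℕ} (hn : n ≠ 0) :
    alternatingChooseSum (fun _ ↦ (1 : R)) n = 1 := by
  obtain ⟨m, rfl⟩ := Nat.exists_eq_succ_of_ne_zero hn
  simpa [alternatingChooseSum] using sum_Icc_neg_one_pow_mul_choose (R := R) (Nat.zero_le m)

theorem mul_alternatingChooseSum_succ_sub (b : ℕ → R) (n : ℕ) :
    ((n : R) + 1) * (alternatingChooseSum b (n + 1) - alternatingChooseSum b n) =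
      alternatingChooseSum (fun k ↦ k * b k) (n + 1) := by
  have htop : alternatingChooseSum b n =
      ∑ k ∈ Icc 1 (n + 1), (-1) ^ (k - 1) * (n.choose k : R) * b k := by
    rw [sum_Icc_succ_top (by omega), Nat.choose_succ_self]
    simp [alternatingChooseSum]
  rw [htop, alternatingChooseSum, alternatingChooseSum, ← sum_sub_distrib, mul_sum]
  refine sum_congr rfl fun k hk ↦ ?_
  obtain ⟨i, rfl⟩ : ∃ i, k = i + 1 := ⟨k - 1, by grind⟩
  have h := congrArg (Nat.cast : ℕ → R) (Nat.add_one_mul_choose_eq n i)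
  have hpascal := congrArg (Nat.cast : ℕ → R) (Nat.choose_succ_succ' n i)
  push_cast at h hpascal ⊢
  linear_combination (-1) ^ i * b (i + 1) * (h + (n + 1) * hpascal)

end CommRing

section Field

variable {K : Type*} [Field K] [CharZero K]

theorem alternatingChooseSum_sum_div_cast (w : ℕ → K) (n : ℕ) :
    alternatingChooseSum (fun k ↦ ∑ j ∈ Icc 1 k, w j / j) n = alternatingChooseSum w n / n := by
  rcases eq_or_ne n 0 with rfl | hn
  · simp [alternatingChooseSum]
  rw [eq_div_iff (Nat.cast_ne_zero.mpr hn), mul_comm, mul_alternatingChooseSum_partialSums]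
  exact alternatingChooseSum_congr fun k hk ↦ mul_div_cancel₀ _ (Nat.cast_ne_zero.mpr (by grind))

theorem alternatingChooseSum_div_cast (a : ℕ → K) (n : ℕ) :
    alternatingChooseSum (fun k ↦ a k / k) n = ∑ m ∈ Icc 1 n, alternatingChooseSum a m / m := by
  induction n with
  | zero => simp [alternatingChooseSum]
  | succ n ih =>
    have hstep := mul_alternatingChooseSum_succ_sub (fun k ↦ a k / k) n
    have hcancel : alternatingChooseSum (fun k ↦ (k : K) * (a k / k)) (n + 1) =
        alternatingChooseSum a (n + 1) :=
      alternatingChooseSum_congr fun k hk ↦ mul_div_cancel₀ _ (Nat.cast_ne_zero.mpr (by grind))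
    rw [sum_Icc_succ_top (by omega), ← ih, ← hcancel, ← hstep]
    push_cast
    field_simp
    ring

end Field

theorem stmt_9_general (n : ℕ) :
    ∑ k ∈ Finset.Icc 1 n, (-1 : ℝ) ^ (k - 1) * (Nat.choose n k : ℝ) * (1 / (k : ℝ)) *
        (∑ j ∈ Finset.Icc 1 k, (∑ i ∈ Finset.Icc 1 j, (1 : ℝ) / i) / j)
      = ∑ k ∈ Finset.Icc 1 n, (1 : ℝ) / (k : ℝ) ^ 3 := by
  set H : ℕ → ℝ := fun j ↦ ∑ i ∈ Icc 1 j, (1 : ℝ) / i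
  have hH : ∀ m ≠ 0, alternatingChooseSum H m = 1 / m := fun m hm ↦ by
    rw [alternatingChooseSum_sum_div_cast, alternatingChooseSum_one hm]
  have hHdiv : ∀ m ≠ 0, alternatingChooseSum (fun k ↦ ∑ j ∈ Icc 1 k, H j / j) m = 1 / m ^ 2 :=
    fun m hm ↦ by rw [alternatingChooseSum_sum_div_cast, hH m hm]; ring
  calc _ = alternatingChooseSum (fun k ↦ (∑ j ∈ Icc 1 k, H j / j) / k) n :=
        sum_congr rfl fun k _ ↦ by ring
    _ = _ := by
      rw [alternatingChooseSum_div_cast]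
      refine sum_congr rfl fun m hm ↦ ?_
      rw [hHdiv m (by grind)]
      ring

theorem stmt_9 (n : ℕ) (hn : 1 ≤ n) :
    ∑ k ∈ Finset.Icc 1 n, (-1 : ℝ) ^ (k - 1) * (Nat.choose n k : ℝ) * (1 / (k : ℝ)) *
        (∑ j ∈ Finset.Icc 1 k, (∑ i ∈ Finset.Icc 1 j, (1 : ℝ) / i) / j)
      = ∑ k ∈ Finset.Icc 1 n, (1 : ℝ) / (k : ℝ) ^ 3 :=
  stmt_9_general n
end

section
/- For all positive integers n, m, S_n(m) = ((-1)^{m-1}/(m-1)!) ∫_0^1 (1 - t^n) (log(1-t))^{m-1}/(1-t) dt, where S_n(m) = ∑_{k=1}^n C(n,k)(-1)^{k-1}/k^m. -/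
/-!
After `t ↦ 1 - t` the integrand becomes `(1 - (1 - u) ^ n) * log u ^ (m - 1) / u`, and the
binomial theorem splits it into `∑ k, C(n,k) (-1)^(k-1) u^(k-1) log u ^ (m - 1)`. The substitution
`u = exp (-y)` turns each `∫₀¹ u ^ s * log u ^ p` into the Gamma integral
`(-1) ^ p ∫₀^∞ y ^ p exp (-(s + 1) y) = (-1) ^ p p! / (s + 1) ^ (p + 1)`.
-/

open MeasureTheory Real Set

section Substitution

variable {E : Type*} [NormedAddCommGroup E] [NormedSpace ℝ E]

lemma image_exp_neg_Ioi : (fun y : ℝ ↦ exp (-y)) '' Ioi 0 = Ioo 0 1 := by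
  ext x
  constructor
  · rintro ⟨y, hy, rfl⟩
    exact ⟨exp_pos _, exp_lt_one_iff.mpr (neg_lt_zero.mpr hy)⟩
  · rintro ⟨h0, h1⟩
    exact ⟨-log x, neg_pos.mpr (log_neg h0 h1), by simp [exp_log h0]⟩

lemma hasDerivWithinAt_exp_neg (s : Set ℝ) (y : ℝ) :
    HasDerivWithinAt (fun y : ℝ ↦ exp (-y)) (-exp (-y)) s y := by
  simpa using ((hasDerivAt_neg y).exp).hasDerivWithinAt

lemma injOn_exp_neg (s : Set ℝ) : InjOn (fun y : ℝ ↦ exp (-y)) s :=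
  fun _ _ _ _ h ↦ neg_injective (exp_injective h)

lemma integral_Ioo_zero_one_eq_integral_comp_exp_neg (g : ℝ → E) :
    ∫ x in Ioo 0 1, g x = ∫ y in Ioi 0, exp (-y) • g (exp (-y)) := by
  rw [← image_exp_neg_Ioi, integral_image_eq_integral_abs_deriv_smul measurableSet_Ioi
    (fun y _ ↦ hasDerivWithinAt_exp_neg _ y) (injOn_exp_neg _)]
  simp only [abs_neg, abs_of_pos (exp_pos _)]

lemma integrableOn_Ioo_zero_one_iff_comp_exp_neg (g : ℝ → E) :
    IntegrableOn g (Ioo 0 1) ↔ IntegrableOn (fun y ↦ exp (-y) • g (exp (-y))) (Ioi 0) := by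
  rw [← image_exp_neg_Ioi, integrableOn_image_iff_integrableOn_abs_deriv_smul measurableSet_Ioi
    (fun y _ ↦ hasDerivWithinAt_exp_neg _ y) (injOn_exp_neg _)]
  simp only [abs_neg, abs_of_pos (exp_pos _)]

lemma intervalIntegral_comp_one_sub_eq_integral_Ioo (f : ℝ → E) :
    ∫ t in (0 : ℝ)..1, f (1 - t) = ∫ u in Ioo 0 1, f u := by
  rw [intervalIntegral.integral_comp_sub_left, sub_self, sub_zero,
    intervalIntegral.integral_of_le zero_le_one, integral_Ioc_eq_integral_Ioo]

end Substitution

lemma integral_pow_mul_exp_neg_mul_Ioi (p : ℕ) {b : ℝ} (hb : 0 < b) :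
    ∫ y in Ioi 0, y ^ p * exp (-(b * y)) = p.factorial / b ^ (p + 1) := by
  have h := integral_rpow_mul_exp_neg_mul_Ioi (a := p + 1) (by positivity) hb
  simp only [add_sub_cancel_right, rpow_natCast] at h
  rw [h, Gamma_nat_eq_factorial, ← Nat.cast_succ, rpow_natCast, one_div_pow, one_div_mul_eq_div]

lemma integrableOn_pow_mul_exp_neg_mul_Ioi (p : ℕ) {b : ℝ} (hb : 0 < b) :
    IntegrableOn (fun y : ℝ ↦ y ^ p * exp (-(b * y))) (Ioi 0) := by
  simpa [neg_mul] using
    integrableOn_rpow_mul_exp_neg_mul_rpow (s := p) (by linarith [p.cast_nonneg (α := ℝ)])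
      one_pos hb

lemma exp_neg_mul_rpow_mul_log_pow (s y : ℝ) (p : ℕ) :
    exp (-y) • (exp (-y) ^ s * log (exp (-y)) ^ p) =
      (-1) ^ p * (y ^ p * exp (-((s + 1) * y))) := by
  rw [smul_eq_mul, ← exp_mul, log_exp, neg_pow, ← mul_assoc, ← exp_add]
  ring_nf

lemma integrableOn_rpow_mul_log_pow {s : ℝ} (hs : -1 < s) (p : ℕ) :
    IntegrableOn (fun x ↦ x ^ s * log x ^ p) (Ioo 0 1) := by
  rw [integrableOn_Ioo_zero_one_iff_comp_exp_neg]
  simp only [exp_neg_mul_rpow_mul_log_pow]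
  exact (integrableOn_pow_mul_exp_neg_mul_Ioi p (by linarith)).const_mul _

lemma integral_rpow_mul_log_pow {s : ℝ} (hs : -1 < s) (p : ℕ) :
    ∫ x in Ioo 0 1, x ^ s * log x ^ p = (-1) ^ p * p.factorial / (s + 1) ^ (p + 1) := by
  rw [integral_Ioo_zero_one_eq_integral_comp_exp_neg]
  simp only [exp_neg_mul_rpow_mul_log_pow]
  rw [integral_const_mul, integral_pow_mul_exp_neg_mul_Ioi p (by linarith), mul_div_assoc]

lemma one_sub_one_sub_pow {R : Type*} [CommRing R] (x : R) (n : ℕ) :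
    1 - (1 - x) ^ n = ∑ k ∈ Finset.Icc 1 n, (n.choose k : R) * (-1) ^ (k - 1) * x ^ k := by
  rw [sub_eq_neg_add 1 x, add_pow, Finset.range_eq_Ico,
    Finset.sum_eq_sum_Ico_succ_bot (Nat.zero_lt_succ n), zero_add, Nat.succ_eq_add_one,
    Finset.Ico_add_one_right_eq_Icc]
  simp only [pow_zero, one_pow, one_mul, Nat.choose_zero_right, Nat.cast_one, sub_add_cancel_left,
    ← Finset.sum_neg_distrib]
  refine Finset.sum_congr rfl fun k hk ↦ ?_
  obtain ⟨j, rfl⟩ := Nat.exists_eq_add_of_le' (Finset.mem_Icc.mp hk).1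
  rw [Nat.add_sub_cancel, neg_pow, pow_succ]
  ring

theorem stmt_10_general (n m : ℕ) (hm : 1 ≤ m) :
    ∑ k ∈ Finset.Icc 1 n, (Nat.choose n k : ℝ) * (-1) ^ (k - 1) / (k : ℝ) ^ m
      = ((-1 : ℝ) ^ (m - 1) / Nat.factorial (m - 1)) *
          ∫ t in (0:ℝ)..1, (1 - t ^ n) * (Real.log (1 - t)) ^ (m - 1) / (1 - t) := by
  obtain ⟨p, rfl⟩ := Nat.exists_eq_add_of_le' hm
  have hexpand : EqOn (fun u ↦ (1 - (1 - u) ^ n) * log u ^ p / u)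
      (fun u ↦ ∑ k ∈ Finset.Icc 1 n,
        (n.choose k : ℝ) * (-1) ^ (k - 1) * (u ^ ((k : ℝ) - 1) * log u ^ p)) (Ioo 0 1) := by
    intro u hu
    simp only [one_sub_one_sub_pow, Finset.sum_mul, Finset.sum_div]
    refine Finset.sum_congr rfl fun k _ ↦ ?_
    rw [rpow_sub_one hu.1.ne', rpow_natCast]
    ring
  have hs : ∀ k ∈ Finset.Icc 1 n, -1 < (k : ℝ) - 1 := fun k hk ↦ by
    have : (1 : ℝ) ≤ k := by exact_mod_cast (Finset.mem_Icc.mp hk).1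
    linarith
  have hsubst := intervalIntegral_comp_one_sub_eq_integral_Ioo
    fun u ↦ (1 - (1 - u) ^ n) * log u ^ p / u
  simp only [sub_sub_cancel] at hsubst
  rw [Nat.add_sub_cancel, hsubst, setIntegral_congr_fun measurableSet_Ioo hexpand,
    integral_finsetSum _ fun k hk ↦ (integrableOn_rpow_mul_log_pow (hs k hk) p).const_mul _,
    Finset.mul_sum]
  refine Finset.sum_congr rfl fun k hk ↦ ?_
  rw [integral_const_mul, integral_rpow_mul_log_pow (hs k hk) p, sub_add_cancel]
  field_simp
  rw [← pow_mul, pow_mul', neg_one_sq, one_pow, mul_one]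

theorem stmt_10 (n m : ℕ) (hn : 1 ≤ n) (hm : 1 ≤ m) :
    ∑ k ∈ Finset.Icc 1 n, (Nat.choose n k : ℝ) * (-1) ^ (k - 1) / (k : ℝ) ^ m
      = ((-1 : ℝ) ^ (m - 1) / Nat.factorial (m - 1)) *
          ∫ t in (0:ℝ)..1, (1 - t ^ n) * (Real.log (1 - t)) ^ (m - 1) / (1 - t) :=
  stmt_10_general n m hm
end

section
/- For every positive integer n, S_n(3) = H_n^3/6 + H_n H_n^{(2)}/2 + H_n^{(3)}/3, where S_n(3) = ∑_{k=1}^n C(n,k)(-1)^{k-1}/k^3. -/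
/-! Write `S_r(n) = ∑_{k=1}^n C(n,k) (-1)^(k-1) / k^r`. Pascal's rule together with
`k C(n+1,k) = (n+1) C(n,k-1)` gives `S_{r+1}(n+1) = S_{r+1}(n) + S_r(n+1)/(n+1)`, and
`S_0(n) = 1` for `n ≥ 1` since `(1 - 1)^n = 0`. Hence `S_{r+1}(n) = ∑_{m ≤ n} S_r(m)/m`, and the
closed forms of `S_1 = H`, `S_2 = (H² + H⁽²⁾)/2` and `S_3` follow one after the other by
induction on `n`. -/

open Finset

noncomputable def harmonicPow (K : Type*) [DivisionRing K] (r n : ℕ) : K :=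
  ∑ k ∈ Icc 1 n, 1 / (k : K) ^ r

noncomputable def altBinomialSum (K : Type*) [DivisionRing K] (r n : ℕ) : K :=
  ∑ k ∈ Icc 1 n, (n.choose k : K) * (-1) ^ (k - 1) / (k : K) ^ r

section

variable {K : Type*} [Field K]

lemma harmonicPow_succ (r n : ℕ) :
    harmonicPow K r (n + 1) = harmonicPow K r n + 1 / ((n : K) + 1) ^ r := by
  rw [harmonicPow, sum_Icc_succ_top (by omega), harmonicPow, Nat.cast_succ]

lemma altBinomialSum_zero_left {n : ℕ} (hn : n ≠ 0) : altBinomialSum K 0 n = 1 := by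
  have binomial : ∑ k ∈ range (n + 1), ((-1) ^ k * n.choose k : K) = 0 := by
    simpa using congrArg (Int.cast (R := K)) (Int.alternating_sum_range_choose_of_ne hn)
  rw [range_eq_Ico, sum_eq_sum_Ico_succ_bot (by omega), Ico_add_one_right_eq_Icc] at binomial
  have term : ∀ k ∈ Icc 1 n,
      (n.choose k : K) * (-1) ^ (k - 1) / (k : K) ^ 0 = -((-1) ^ k * n.choose k) := by
    intro k hk
    obtain ⟨j, rfl⟩ : ∃ j, k = j + 1 := ⟨k - 1, by grind⟩
    simp [pow_succ, mul_comm]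
  rw [altBinomialSum, sum_congr rfl term, sum_neg_distrib]
  simp only [pow_zero, Nat.choose_zero_right, Nat.cast_one, mul_one, zero_add] at binomial
  linear_combination -binomial

variable [CharZero K]

lemma altBinomialSum_succ_succ (r n : ℕ) :
    altBinomialSum K (r + 1) (n + 1)
      = altBinomialSum K (r + 1) n + altBinomialSum K r (n + 1) / ((n : K) + 1) := by
  have pascal : ∀ k ∈ Icc 1 (n + 1),
      ((n + 1).choose k : K) * (-1) ^ (k - 1) / (k : K) ^ (r + 1)
        = (n.choose k : K) * (-1) ^ (k - 1) / (k : K) ^ (r + 1)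
          + ((n + 1).choose k : K) * (-1) ^ (k - 1) / (k : K) ^ r / ((n : K) + 1) := by
    intro k hk
    obtain ⟨j, rfl⟩ : ∃ j, k = j + 1 := ⟨k - 1, by grind⟩
    have absorb : ((n : K) + 1) * n.choose j = (n + 1).choose (j + 1) * ((j + 1 : ℕ) : K) := by
      exact_mod_cast Nat.add_one_mul_choose_eq n j
    rw [Nat.choose_succ_succ', Nat.cast_add] at absorb ⊢
    field_simp
    linear_combination ((j + 1 : ℕ) : K) ^ r * absorb
  rw [altBinomialSum, sum_congr rfl pascal, sum_add_distrib, ← sum_div,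
    sum_Icc_succ_top (by omega), Nat.choose_succ_self, Nat.cast_zero, zero_mul, zero_div, add_zero]
  rfl

lemma altBinomialSum_one (n : ℕ) : altBinomialSum K 1 n = harmonicPow K 1 n := by
  induction n with
  | zero => simp [altBinomialSum, harmonicPow]
  | succ m ih =>
    rw [altBinomialSum_succ_succ, altBinomialSum_zero_left m.succ_ne_zero, ih, harmonicPow_succ,
      pow_one]

lemma altBinomialSum_two (n : ℕ) :
    altBinomialSum K 2 n = (harmonicPow K 1 n ^ 2 + harmonicPow K 2 n) / 2 := by
  induction n with
  | zero => simp [altBinomialSum, harmonicPow]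
  | succ m ih =>
    have hm : (m : K) + 1 ≠ 0 := Nat.cast_add_one_ne_zero m
    rw [altBinomialSum_succ_succ, altBinomialSum_one, ih, harmonicPow_succ, harmonicPow_succ]
    field_simp
    ring

lemma altBinomialSum_three (n : ℕ) :
    altBinomialSum K 3 n
      = harmonicPow K 1 n ^ 3 / 6 + harmonicPow K 1 n * harmonicPow K 2 n / 2
        + harmonicPow K 3 n / 3 := by
  induction n with
  | zero => simp [altBinomialSum, harmonicPow]
  | succ m ih =>
    have hm : (m : K) + 1 ≠ 0 := Nat.cast_add_one_ne_zero m
    rw [altBinomialSum_succ_succ, altBinomialSum_two, ih, harmonicPow_succ, harmonicPow_succ,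
      harmonicPow_succ]
    field_simp
    ring

end

theorem stmt_12_general (n : ℕ) :
    ∑ k ∈ Finset.Icc 1 n, (Nat.choose n k : ℝ) * (-1) ^ (k - 1) / (k : ℝ) ^ 3
      = (∑ k ∈ Finset.Icc 1 n, (1 : ℝ) / k) ^ 3 / 6
        + (∑ k ∈ Finset.Icc 1 n, (1 : ℝ) / k) * (∑ k ∈ Finset.Icc 1 n, (1 : ℝ) / (k : ℝ) ^ 2) / 2
        + (∑ k ∈ Finset.Icc 1 n, (1 : ℝ) / (k : ℝ) ^ 3) / 3 := by
  simpa only [altBinomialSum, harmonicPow, pow_one] using altBinomialSum_three (K := ℝ) n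

theorem stmt_12 (n : ℕ) (hn : 1 ≤ n) :
    ∑ k ∈ Finset.Icc 1 n, (Nat.choose n k : ℝ) * (-1) ^ (k - 1) / (k : ℝ) ^ 3
      = (∑ k ∈ Finset.Icc 1 n, (1 : ℝ) / k) ^ 3 / 6
        + (∑ k ∈ Finset.Icc 1 n, (1 : ℝ) / k) * (∑ k ∈ Finset.Icc 1 n, (1 : ℝ) / (k : ℝ) ^ 2) / 2
        + (∑ k ∈ Finset.Icc 1 n, (1 : ℝ) / (k : ℝ) ^ 3) / 3 :=
  stmt_12_general n
end

section
/- For every positive integer n, S_n(4) = (1/24)(H_n^4 + 6 H_n^2 H_n^{(2)} + 8 H_n H_n^{(3)} + 3 (H_n^{(2)})^2 + 6 H_n^{(4)}), where S_n(4) = ∑_{k=1}^n C(n,k)(-1)^{k-1}/k^4. -/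
/-!
Pascal's rule together with `(n + 1) * C(n, k) = (k + 1) * C(n + 1, k + 1)` gives the recursion
`S_{n+1}(r+1) = S_n(r+1) + S_{n+1}(r) / (n + 1)`, i.e. `S_n(r+1) = ∑_{m ≤ n} S_m(r) / m`.
Starting from `S_n(0) = 1` for `n ≥ 1`, the closed forms of `S_n(1), …, S_n(4)` in terms of the
generalized harmonic numbers follow one after the other by induction on `n`, since
`H_{n+1}^{(j)} = H_n^{(j)} + 1 / (n + 1)^j`. The right-hand sides are the cycle indices of the
symmetric groups `𝔖_r` evaluated at `p_j = H_n^{(j)}`.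
-/

open Finset

noncomputable section

/-- `S_n(r)`. -/
def binomAltSum (r n : ℕ) : ℝ :=
  ∑ k ∈ Icc 1 n, (n.choose k : ℝ) * (-1) ^ (k - 1) / (k : ℝ) ^ r

/-- `H_n^{(r)}`. -/
def genHarmonic (r n : ℕ) : ℝ :=
  ∑ k ∈ Icc 1 n, (1 : ℝ) / (k : ℝ) ^ r

end

lemma genHarmonic_zero_right (r : ℕ) : genHarmonic r 0 = 0 := by
  simp [genHarmonic]

lemma genHarmonic_succ (r n : ℕ) :
    genHarmonic r (n + 1) = genHarmonic r n + 1 / ((n : ℝ) + 1) ^ r := by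
  rw [genHarmonic, sum_Icc_succ_top (by omega), genHarmonic]
  push_cast
  rfl

lemma binomAltSum_zero_right (r : ℕ) : binomAltSum r 0 = 0 := by
  simp [binomAltSum]

lemma binomAltSum_zero_left {n : ℕ} (hn : n ≠ 0) : binomAltSum 0 n = 1 := by
  obtain ⟨n, rfl⟩ := Nat.exists_eq_succ_of_ne_zero hn
  have h := Int.alternating_sum_range_choose_of_ne (n := n + 1) (by omega)
  rw [range_eq_Ico, sum_eq_sum_Ico_succ_bot (by omega), Ico_add_one_right_eq_Icc] at h
  have hsum : ∑ k ∈ Icc 1 (n + 1), ((-1 : ℝ) ^ k * (n + 1).choose k) = -1 := by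
    have := congrArg (Int.cast : ℤ → ℝ) h
    push_cast at this
    simp only [Nat.choose_zero_right, Nat.cast_one, one_mul] at this
    linarith
  calc binomAltSum 0 (n + 1) = -∑ k ∈ Icc 1 (n + 1), ((-1 : ℝ) ^ k * (n + 1).choose k) := by
        rw [binomAltSum, ← sum_neg_distrib]
        refine sum_congr rfl fun k hk => ?_
        obtain ⟨j, rfl⟩ : ∃ j, k = j + 1 := ⟨k - 1, by grind⟩
        simp [pow_succ, mul_comm]
    _ = 1 := by rw [hsum, neg_neg]

/-- The term `k = j + 1` of `S_{n+1}(r+1) - S_n(r+1)`. -/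
lemma choose_succ_div_sub_choose_div (r n j : ℕ) :
    ((n + 1).choose (j + 1) : ℝ) * (-1) ^ j / ((j : ℝ) + 1) ^ (r + 1)
        - (n.choose (j + 1) : ℝ) * (-1) ^ j / ((j : ℝ) + 1) ^ (r + 1)
      = ((n + 1).choose (j + 1) : ℝ) * (-1) ^ j / ((j : ℝ) + 1) ^ r / ((n : ℝ) + 1) := by
  have hpascal : ((n + 1).choose (j + 1) : ℝ) = n.choose j + n.choose (j + 1) := by
    exact_mod_cast Nat.choose_succ_succ n j
  have habsorb : ((n : ℝ) + 1) * n.choose j = ((n + 1).choose (j + 1) : ℝ) * ((j : ℝ) + 1) := by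
    exact_mod_cast Nat.add_one_mul_choose_eq n j
  rw [hpascal] at habsorb ⊢
  field_simp
  linear_combination ((j : ℝ) + 1) ^ r * habsorb

lemma binomAltSum_succ_succ (r n : ℕ) :
    binomAltSum (r + 1) (n + 1) = binomAltSum (r + 1) n + binomAltSum r (n + 1) / ((n : ℝ) + 1) := by
  have hextend : binomAltSum (r + 1) n
      = ∑ k ∈ Icc 1 (n + 1), (n.choose k : ℝ) * (-1) ^ (k - 1) / (k : ℝ) ^ (r + 1) := by
    rw [sum_Icc_succ_top (by omega), Nat.choose_succ_self]
    simp [binomAltSum]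
  rw [hextend, binomAltSum, binomAltSum, sum_div, ← sub_eq_iff_eq_add', ← sum_sub_distrib]
  refine sum_congr rfl fun k hk => ?_
  obtain ⟨j, rfl⟩ : ∃ j, k = j + 1 := ⟨k - 1, by grind⟩
  push_cast
  exact choose_succ_div_sub_choose_div r n j

lemma binomAltSum_one (n : ℕ) : binomAltSum 1 n = genHarmonic 1 n := by
  induction n with
  | zero => rw [binomAltSum_zero_right, genHarmonic_zero_right]
  | succ m ih =>
    rw [binomAltSum_succ_succ, ih, binomAltSum_zero_left (by omega), genHarmonic_succ]
    ring

lemma binomAltSum_two (n : ℕ) :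
    binomAltSum 2 n = (1 / 2) * (genHarmonic 1 n ^ 2 + genHarmonic 2 n) := by
  induction n with
  | zero => simp [binomAltSum_zero_right, genHarmonic_zero_right]
  | succ m ih =>
    rw [binomAltSum_succ_succ, ih, binomAltSum_one, genHarmonic_succ, genHarmonic_succ]
    field_simp
    ring

lemma binomAltSum_three (n : ℕ) :
    binomAltSum 3 n = (1 / 6) * (genHarmonic 1 n ^ 3 + 3 * genHarmonic 1 n * genHarmonic 2 n
      + 2 * genHarmonic 3 n) := by
  induction n with
  | zero => simp [binomAltSum_zero_right, genHarmonic_zero_right]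
  | succ m ih =>
    rw [binomAltSum_succ_succ, ih, binomAltSum_two, genHarmonic_succ, genHarmonic_succ,
      genHarmonic_succ]
    field_simp
    ring

lemma binomAltSum_four (n : ℕ) :
    binomAltSum 4 n = (1 / 24) * (genHarmonic 1 n ^ 4 + 6 * genHarmonic 1 n ^ 2 * genHarmonic 2 n
      + 8 * genHarmonic 1 n * genHarmonic 3 n + 3 * genHarmonic 2 n ^ 2 + 6 * genHarmonic 4 n) := by
  induction n with
  | zero => simp [binomAltSum_zero_right, genHarmonic_zero_right]
  | succ m ih =>
    rw [binomAltSum_succ_succ, ih, binomAltSum_three, genHarmonic_succ, genHarmonic_succ,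
      genHarmonic_succ, genHarmonic_succ]
    field_simp
    ring

theorem stmt_13_general (n : ℕ) :
    ∑ k ∈ Finset.Icc 1 n, (Nat.choose n k : ℝ) * (-1) ^ (k - 1) / (k : ℝ) ^ 4
      = (1 / 24) * ((∑ k ∈ Finset.Icc 1 n, (1 : ℝ) / k) ^ 4
        + 6 * (∑ k ∈ Finset.Icc 1 n, (1 : ℝ) / k) ^ 2 * (∑ k ∈ Finset.Icc 1 n, (1 : ℝ) / (k : ℝ) ^ 2)
        + 8 * (∑ k ∈ Finset.Icc 1 n, (1 : ℝ) / k) * (∑ k ∈ Finset.Icc 1 n, (1 : ℝ) / (k : ℝ) ^ 3)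
        + 3 * (∑ k ∈ Finset.Icc 1 n, (1 : ℝ) / (k : ℝ) ^ 2) ^ 2
        + 6 * (∑ k ∈ Finset.Icc 1 n, (1 : ℝ) / (k : ℝ) ^ 4)) := by
  simpa [binomAltSum, genHarmonic] using binomAltSum_four n

theorem stmt_13 (n : ℕ) (hn : 1 ≤ n) :
    ∑ k ∈ Finset.Icc 1 n, (Nat.choose n k : ℝ) * (-1) ^ (k - 1) / (k : ℝ) ^ 4
      = (1 / 24) * ((∑ k ∈ Finset.Icc 1 n, (1 : ℝ) / k) ^ 4
        + 6 * (∑ k ∈ Finset.Icc 1 n, (1 : ℝ) / k) ^ 2 * (∑ k ∈ Finset.Icc 1 n, (1 : ℝ) / (k : ℝ) ^ 2)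
        + 8 * (∑ k ∈ Finset.Icc 1 n, (1 : ℝ) / k) * (∑ k ∈ Finset.Icc 1 n, (1 : ℝ) / (k : ℝ) ^ 3)
        + 3 * (∑ k ∈ Finset.Icc 1 n, (1 : ℝ) / (k : ℝ) ^ 2) ^ 2
        + 6 * (∑ k ∈ Finset.Icc 1 n, (1 : ℝ) / (k : ℝ) ^ 4)) :=
  stmt_13_general n
end

section
/- ∑_{n=1}^∞ (H_n^2 + H_n^{(2)})/2^n = 2 ζ(2) = π²/3. -/
/-!
Squaring `H_n = H_{n-1} + 1/n` and telescoping gives `H_n² + H_n^{(2)} = 2 ∑_{k ≤ n} H_k / k`, so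
the series is a Cauchy product with the geometric series and equals `4 ∑_k H_k / (k 2^k)`.
Euler's transformation evaluates the latter: `H_k / k = ∑_j (-1)^j C(k-1, j) / (j+1)²` and
`∑_k C(k-1, j) / 2^k = 1`, so `∑_k H_k / (k 2^k) = ∑_j (-1)^j / (j+1)² = π² / 12`.
-/

open Finset Real

lemma sum_Icc_one_eq_sum_range {M : Type*} [AddCommMonoid M] (f : ℕ → M) (n : ℕ) :
    ∑ k ∈ Icc 1 n, f k = ∑ k ∈ range n, f (k + 1) := by
  rw [range_eq_Ico, sum_Ico_add' f 0 n 1, zero_add, Ico_add_one_right_eq_Icc]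

lemma harmonic_sq_add_sum_inv_sq (m : ℕ) :
    (harmonic m : ℝ) ^ 2 + ∑ k ∈ range m, 1 / ((k : ℝ) + 1) ^ 2
      = 2 * ∑ k ∈ range m, (harmonic (k + 1) : ℝ) / (k + 1) := by
  induction m with
  | zero => simp
  | succ m ih =>
    rw [sum_range_succ, sum_range_succ, mul_add, ← ih, harmonic_succ]
    push_cast
    field_simp
    ring

section BinomialHarmonic

variable {K : Type*} [Field K] [CharZero K]

lemma Nat.cast_choose_div_add_one (k j : ℕ) :
    (k.choose j : K) / (j + 1) = (k + 1).choose (j + 1) / (k + 1) := by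
  rw [div_eq_div_iff (Nat.cast_add_one_ne_zero j) (Nat.cast_add_one_ne_zero k), mul_comm]
  exact_mod_cast Nat.add_one_mul_choose_eq k j

lemma alternating_sum_range_choose_div_add_one (m : ℕ) :
    ∑ j ∈ range (m + 1), (-1 : K) ^ j * m.choose j / (j + 1) = 1 / (m + 1) := by
  have h := Int.alternating_sum_range_choose_of_ne (Nat.succ_ne_zero m)
  rw [sum_range_succ'] at h
  have hsum : ∑ j ∈ range (m + 1), ((-1) ^ j * (m + 1).choose (j + 1) : ℤ) = 1 := by
    simp only [Nat.succ_eq_add_one, pow_succ, mul_neg_one, neg_mul, sum_neg_distrib, pow_zero,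
      Nat.choose_zero_right, Nat.cast_one, one_mul] at h
    linarith
  simp_rw [mul_div_assoc, Nat.cast_choose_div_add_one, ← mul_div_assoc, ← sum_div]
  rw [show ∑ j ∈ range (m + 1), (-1 : K) ^ j * ((m + 1).choose (j + 1) : ℕ) = 1 by
    exact_mod_cast hsum]

lemma alternating_sum_range_choose_add_one_div_eq_harmonic (m : ℕ) :
    ∑ j ∈ range m, (-1 : K) ^ j * m.choose (j + 1) / (j + 1) = (harmonic m : K) := by
  induction m with
  | zero => simp
  | succ m ih =>
    simp_rw [Nat.choose_succ_succ, Nat.cast_add, mul_add, add_div, sum_add_distrib,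
      alternating_sum_range_choose_div_add_one, sum_range_succ _ m, Nat.choose_succ_self, ih,
      harmonic_succ]
    push_cast
    ring

lemma alternating_sum_range_choose_div_sq_eq_harmonic_div (k : ℕ) :
    ∑ j ∈ range (k + 1), (-1 : K) ^ j * k.choose j / (j + 1) ^ 2
      = (harmonic (k + 1) : K) / (k + 1) := by
  rw [← alternating_sum_range_choose_add_one_div_eq_harmonic, sum_div]
  refine sum_congr rfl fun j _ => ?_
  rw [sq, ← div_div, mul_div_assoc, Nat.cast_choose_div_add_one]
  ring

end BinomialHarmonic

lemma hasSum_choose_mul_pow {𝕜 : Type*} [NormedDivisionRing 𝕜] (j : ℕ) {r : 𝕜} (hr : ‖r‖ < 1) :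
    HasSum (fun n => (n.choose j : 𝕜) * r ^ n) (r ^ j / (1 - r) ^ (j + 1)) := by
  rw [← hasSum_nat_add_iff' j,
    sum_eq_zero fun i hi => by
      rw [Nat.choose_eq_zero_of_lt (mem_range.mp hi), Nat.cast_zero, zero_mul],
    sub_zero, div_eq_mul_one_div]
  convert! (hasSum_choose_mul_geometric_of_norm_lt_one j hr).mul_left (r ^ j) using 2 with n
  rw [← mul_assoc, ← Nat.cast_comm, mul_assoc, ← pow_add, add_comm j n]

lemma hasSum_sum_range_mul_geometric {K : Type*} [NormedDivisionRing K] [CompleteSpace K]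
    {ξ : K} (hξ : ‖ξ‖ < 1) {a : ℕ → K} (ha : Summable fun k => ‖a k * ξ ^ k‖) :
    HasSum (fun n => (∑ k ∈ range (n + 1), a k) * ξ ^ n) ((∑' k, a k * ξ ^ k) * (1 - ξ)⁻¹) := by
  rw [← tsum_geometric_of_norm_lt_one hξ]
  convert! hasSum_sum_range_mul_of_summable_norm ha (summable_norm_geometric_of_norm_lt_one hξ)
    using 2 with n
  rw [sum_mul]
  refine sum_congr rfl fun k hk => ?_
  rw [mul_assoc, ← pow_add, Nat.add_sub_cancel' (Nat.le_of_lt_succ (mem_range.mp hk))]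

lemma hasSum_neg_one_pow_div_add_one_sq :
    HasSum (fun n : ℕ => (-1) ^ n / ((n : ℝ) + 1) ^ 2) (π ^ 2 / 12) := by
  have h := hasSum_one_div_nat_pow_mul_cos one_ne_zero (x := 1 / 2) (by norm_num)
  have hB : bernoulliFun (2 * 1) (1 / 2) = -1 / 12 := by
    rw [mul_one, bernoulliFun_two]
    norm_num
  have hterm (n : ℕ) : 1 / ((n + 1 : ℕ) : ℝ) ^ (2 * 1) * cos (2 * π * (n + 1 : ℕ) * (1 / 2))
      = -((-1) ^ n / ((n : ℝ) + 1) ^ 2) := by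
    rw [show 2 * π * ((n + 1 : ℕ) : ℝ) * (1 / 2) = (n + 1 : ℕ) * π by ring, cos_nat_mul_pi]
    push_cast
    ring
  rw [← bernoulliFun, hB, ← hasSum_nat_add_iff' 1] at h
  simp only [hterm, range_one, sum_singleton, Nat.cast_zero] at h
  convert! h.neg using 1
  · simp
  · norm_num
    ring

lemma hasSum_choose_div_two_pow_succ (j : ℕ) :
    HasSum (fun k => (k.choose j : ℝ) / 2 ^ (k + 1)) 1 := by
  have h := (hasSum_choose_mul_pow j (r := (1 / 2 : ℝ)) (by norm_num)).div_const 2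
  convert! h using 1
  · funext k
    rw [one_div_pow, pow_succ]
    ring
  · rw [pow_succ]
    field_simp
    norm_num

/-- Euler's transformation of series at `1/2`. -/
lemma hasSum_sum_choose_mul_div_two_pow {b : ℕ → ℝ} (hb : Summable fun j => |b j|) :
    HasSum (fun k => (∑ j ∈ range (k + 1), k.choose j * b j) / 2 ^ (k + 1)) (∑' j, b j) := by
  set G : ℕ × ℕ → ℝ := fun p => p.1.choose p.2 * b p.2 / 2 ^ (p.1 + 1)
  have hcol (c : ℝ) (j : ℕ) : HasSum (fun k => (k.choose j : ℝ) * c / 2 ^ (k + 1)) c := by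
    have h := (hasSum_choose_div_two_pow_succ j).mul_left c
    rw [mul_one] at h
    exact h.congr_fun fun k => by ring
  have hG : Summable G := by
    have habs (p : ℕ × ℕ) : |G p| = p.1.choose p.2 * |b p.2| / 2 ^ (p.1 + 1) := by
      simp [G, abs_div, abs_mul]
    rw [← summable_abs_iff, ← (Equiv.prodComm ℕ ℕ).summable_iff]
    refine (summable_prod_of_nonneg fun _ => abs_nonneg _).2 ⟨fun j => ?_, ?_⟩
    · simpa [habs] using (hcol |b j| j).summable
    · simpa [habs, (hcol _ _).tsum_eq] using hb
  have hrow (k : ℕ) :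
      HasSum (fun j => G (k, j)) ((∑ j ∈ range (k + 1), k.choose j * b j) / 2 ^ (k + 1)) := by
    rw [sum_div]
    refine hasSum_sum_of_ne_finset_zero fun j hj => ?_
    rw [mem_range, not_lt] at hj
    simp [G, Nat.choose_eq_zero_of_lt (Nat.lt_of_succ_le hj)]
  have hb' : HasSum b (∑' p, G p) :=
    ((Equiv.prodComm ℕ ℕ).hasSum_iff.mpr hG.hasSum).prod_fiberwise fun j => hcol (b j) j
  rw [hb'.tsum_eq]
  exact hG.hasSum.prod_fiberwise hrow

lemma hasSum_harmonic_succ_div_mul_half_pow :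
    HasSum (fun k : ℕ => (harmonic (k + 1) : ℝ) / (k + 1) * (1 / 2) ^ k) (π ^ 2 / 6) := by
  have hb : Summable fun j : ℕ => |(-1) ^ j / ((j : ℝ) + 1) ^ 2| := by
    simpa [abs_div] using (summable_nat_add_iff 1).mpr (Real.summable_one_div_nat_pow.mpr one_lt_two)
  have h := (hasSum_sum_choose_mul_div_two_pow hb).mul_left 2
  rw [hasSum_neg_one_pow_div_add_one_sq.tsum_eq, show 2 * (π ^ 2 / 12) = π ^ 2 / 6 by ring] at h
  refine h.congr_fun fun k => ?_
  rw [← alternating_sum_range_choose_div_sq_eq_harmonic_div, pow_succ, one_div_pow]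
  field_simp
  exact sum_congr rfl fun j _ => by ring

theorem stmt_16 :
    ∑' n : ℕ, ((∑ k ∈ Finset.Icc 1 (n + 1), (1 : ℝ) / k) ^ 2
        + ∑ k ∈ Finset.Icc 1 (n + 1), (1 : ℝ) / (k : ℝ) ^ 2) / 2 ^ (n + 1)
      = Real.pi ^ 2 / 3 := by
  have hc := hasSum_harmonic_succ_div_mul_half_pow
  have hc_nonneg (k : ℕ) : 0 ≤ (harmonic (k + 1) : ℝ) / (k + 1) * (1 / 2) ^ k := by
    have : (0 : ℝ) ≤ harmonic (k + 1) := by exact_mod_cast (harmonic_pos k.succ_ne_zero).le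
    positivity
  have h := hasSum_sum_range_mul_geometric (by norm_num : ‖(1 / 2 : ℝ)‖ < 1)
    (hc.summable.congr fun k => by rw [Real.norm_of_nonneg (hc_nonneg k)])
  have hH (m : ℕ) : ∑ k ∈ Icc 1 m, (1 : ℝ) / k = harmonic m := by simp [harmonic_eq_sum_Icc]
  rw [hc.tsum_eq] at h
  convert h.tsum_eq using 1
  · refine tsum_congr fun n => ?_
    rw [hH, sum_Icc_one_eq_sum_range (fun k => 1 / (k : ℝ) ^ 2)]
    push_cast
    rw [harmonic_sq_add_sum_inv_sq, pow_succ, one_div_pow]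
    field_simp
  · norm_num
    ring
end
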